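/- arXiv:1804.06400 — 2 statements merged into one kernel-verified Lean document; each statement's English description precedes it below -/
import Mathlib

section
/- Let k be a field and a, b ≥ 1 natural numbers. The fiber product of k[x]/(x^{a+1}) and k[y]/(y^{b+1}) over k (with respect to the augmentation maps sending x ↦ 0, y ↦ 0) is isomorphic as a k-algebra to k[x,y]/(x^{a+1}, y^{b+1}, x·y). -/
/-!
In `R = k[x,y]/(x^(a+1), y^(b+1), xy)` every mixed monomial vanishes, so every element is
`u(x) + w(y)` with `u ∈ A = k[x]/(x^(a+1))` and `w ∈ B = k[y]/(y^(b+1))`. Hence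
`z ↦ (z(x,0), z(0,y))` is injective on `R`, and a pair `(u, w)` with `u(0) = w(0)` is the image
of `u(x) + w(y) - u(0)`.
-/

open Polynomial

section FiberProduct

variable {k A B R : Type*} [CommRing k] [CommRing A] [CommRing B] [CommRing R]
  [Algebra k A] [Algebra k B] [Algebra k R]

abbrev fiberProduct (f : A →ₐ[k] k) (g : B →ₐ[k] k) : Subalgebra k (A × B) :=
  AlgHom.equalizer (f.comp (AlgHom.fst k A B)) (g.comp (AlgHom.snd k A B))

variable {f : A →ₐ[k] k} {g : B →ₐ[k] k} {φ : R →ₐ[k] A × B} {ιA : A →ₐ[k] R}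
  {ιB : B →ₐ[k] R}

theorem apply_mem_fiberProduct
    (hA : ∀ u, φ (ιA u) = (u, algebraMap k B (f u)))
    (hB : ∀ w, φ (ιB w) = (algebraMap k A (g w), w))
    (hspan : ∀ z, ∃ u w, ιA u + ιB w = z) (z : R) : φ z ∈ fiberProduct f g := by
  obtain ⟨u, w, rfl⟩ := hspan z
  simp only [map_add, hA, hB, Prod.mk_add_mk, AlgHom.mem_equalizer, AlgHom.coe_comp,
    Function.comp_apply, AlgHom.fst_apply, AlgHom.snd_apply, AlgHom.commutes,
    Algebra.algebraMap_self, RingHom.id_apply]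

theorem injective_of_forall_exists_add
    (hA : ∀ u, φ (ιA u) = (u, algebraMap k B (f u)))
    (hB : ∀ w, φ (ιB w) = (algebraMap k A (g w), w))
    (hspan : ∀ z, ∃ u w, ιA u + ιB w = z) : Function.Injective φ := by
  rw [injective_iff_map_eq_zero]
  intro z hz
  obtain ⟨u, w, rfl⟩ := hspan z
  rw [map_add, hA, hB, Prod.mk_add_mk, Prod.mk_eq_zero] at hz
  obtain ⟨hu, hw⟩ := hz
  have hu' : u = -algebraMap k A (g w) := eq_neg_of_add_eq_zero_left hu
  have hw' : w = -algebraMap k B (f u) := eq_neg_of_add_eq_zero_right hw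
  have hfu : f u = -g w := by rw [hu', map_neg, AlgHom.commutes, Algebra.algebraMap_self,
    RingHom.id_apply]
  rw [hu', hw', hfu]
  simp only [map_neg, neg_neg, AlgHom.commutes, Algebra.algebraMap_self, RingHom.id_apply,
    neg_add_cancel]

theorem fiberProduct_le_range
    (hA : ∀ u, φ (ιA u) = (u, algebraMap k B (f u)))
    (hB : ∀ w, φ (ιB w) = (algebraMap k A (g w), w)) :
    fiberProduct f g ≤ φ.range := by
  rintro ⟨u, w⟩ huw
  have hfg : f u = g w := huw
  refine (φ.mem_range).2 ⟨ιA u + ιB w - algebraMap k R (f u), ?_⟩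
  simp only [hfg, map_sub, map_add, hA, hB, Prod.mk_add_mk, AlgHom.commutes,
    Prod.algebraMap_apply, Prod.mk_sub_mk, add_sub_cancel_right, add_sub_cancel_left]

noncomputable def fiberProductEquiv
    (hA : ∀ u, φ (ιA u) = (u, algebraMap k B (f u)))
    (hB : ∀ w, φ (ιB w) = (algebraMap k A (g w), w))
    (hspan : ∀ z, ∃ u w, ιA u + ιB w = z) : R ≃ₐ[k] fiberProduct f g :=
  AlgEquiv.ofBijective (φ.codRestrict _ (apply_mem_fiberProduct hA hB hspan))
    ⟨fun _ _ h => injective_of_forall_exists_add hA hB hspan (congrArg Subtype.val h),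
      fun ⟨p, hp⟩ => by
        obtain ⟨z, hz⟩ := fiberProduct_le_range hA hB hp
        exact ⟨z, Subtype.ext hz⟩⟩

end FiberProduct

noncomputable section TruncatedPolynomials

variable (k : Type*) [CommRing k] (a b : ℕ)

-- `AdjoinRoot f` is by definition `k[X] ⧸ Ideal.span {f}`.
abbrev TruncPoly (n : ℕ) : Type _ := AdjoinRoot (X ^ (n + 1) : k[X])

abbrev TruncCross : Type _ :=
  MvPolynomial (Fin 2) k ⧸ Ideal.span {(MvPolynomial.X 0 : MvPolynomial (Fin 2) k) ^ (a + 1),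
    MvPolynomial.X 1 ^ (b + 1), MvPolynomial.X 0 * MvPolynomial.X 1}

variable {k}

@[simp]
theorem TruncPoly.root_pow (n : ℕ) : AdjoinRoot.root (X ^ (n + 1) : k[X]) ^ (n + 1) = 0 := by
  rw [← AdjoinRoot.mk_X, ← map_pow, AdjoinRoot.mk_self]

def TruncPoly.lift {S : Type*} [CommRing S] [Algebra k S] {n : ℕ} (s : S)
    (hs : s ^ (n + 1) = 0) : TruncPoly k n →ₐ[k] S :=
  AdjoinRoot.liftAlgHom _ (Algebra.ofId k S) s (by simpa using hs)

@[simp]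
theorem TruncPoly.lift_root {S : Type*} [CommRing S] [Algebra k S] {n : ℕ} (s : S)
    (hs : s ^ (n + 1) = 0) : TruncPoly.lift s hs (AdjoinRoot.root (X ^ (n + 1) : k[X])) = s :=
  AdjoinRoot.liftAlgHom_root _ _ _ _

variable {a b}

namespace TruncCross

def x : TruncCross k a b := Ideal.Quotient.mk _ (MvPolynomial.X 0)

def y : TruncCross k a b := Ideal.Quotient.mk _ (MvPolynomial.X 1)

theorem x_pow : (x : TruncCross k a b) ^ (a + 1) = 0 := by
  rw [x, ← map_pow, Ideal.Quotient.eq_zero_iff_mem]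
  exact Ideal.subset_span (by simp)

theorem y_pow : (y : TruncCross k a b) ^ (b + 1) = 0 := by
  rw [y, ← map_pow, Ideal.Quotient.eq_zero_iff_mem]
  exact Ideal.subset_span (by simp)

theorem x_mul_y : (x : TruncCross k a b) * y = 0 := by
  rw [x, y, ← map_mul, Ideal.Quotient.eq_zero_iff_mem]
  exact Ideal.subset_span (by simp)

def inl : TruncPoly k a →ₐ[k] TruncCross k a b := TruncPoly.lift x x_pow

def inr : TruncPoly k b →ₐ[k] TruncCross k a b := TruncPoly.lift y y_pow

def toProd : TruncCross k a b →ₐ[k] TruncPoly k a × TruncPoly k b :=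
  Ideal.Quotient.liftₐ _ (MvPolynomial.aeval ![(AdjoinRoot.root _, 0), (0, AdjoinRoot.root _)])
    fun p hp => by
      refine RingHom.mem_ker.1 <|
        (Ideal.span_le (I := RingHom.ker (MvPolynomial.aeval _).toRingHom)).2 ?_ hp
      simp [Set.insert_subset_iff, Prod.ext_iff]

@[simp]
theorem toProd_x : toProd (x : TruncCross k a b) = (AdjoinRoot.root _, 0) := by
  change MvPolynomial.aeval _ (MvPolynomial.X 0) = _
  simp

@[simp]
theorem toProd_y : toProd (y : TruncCross k a b) = (0, AdjoinRoot.root _) := by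
  change MvPolynomial.aeval _ (MvPolynomial.X 1) = _
  simp

theorem toProd_inl {f : TruncPoly k a →ₐ[k] k} (hf : f (AdjoinRoot.root _) = 0)
    (u : TruncPoly k a) : toProd (inl u : TruncCross k a b) = (u, algebraMap k _ (f u)) := by
  suffices h : toProd.comp inl = (AlgHom.id k _).prod ((Algebra.ofId k _).comp f) from
    AlgHom.congr_fun h u
  apply AdjoinRoot.algHom_ext
  simp only [inl, AlgHom.coe_comp, Function.comp_apply, TruncPoly.lift_root, toProd_x,
    AlgHom.prod_apply, AlgHom.coe_id, id_eq, hf, map_zero]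

theorem toProd_inr {g : TruncPoly k b →ₐ[k] k} (hg : g (AdjoinRoot.root _) = 0)
    (w : TruncPoly k b) : toProd (inr w : TruncCross k a b) = (algebraMap k _ (g w), w) := by
  suffices h : toProd.comp inr = ((Algebra.ofId k _).comp g).prod (AlgHom.id k _) from
    AlgHom.congr_fun h w
  apply AdjoinRoot.algHom_ext
  simp only [inr, AlgHom.coe_comp, Function.comp_apply, TruncPoly.lift_root, toProd_y,
    AlgHom.prod_apply, AlgHom.coe_id, id_eq, hg, map_zero]

theorem mk_monomial (s : Fin 2 →₀ ℕ) (c : k) :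
    (Ideal.Quotient.mk _ (MvPolynomial.monomial s c) : TruncCross k a b) =
      c • (x ^ s 0 * y ^ s 1) := by
  rw [MvPolynomial.monomial_eq, Finsupp.prod_fintype _ _ (by simp), Fin.prod_univ_two,
    MvPolynomial.C_mul', ← Ideal.Quotient.mkₐ_eq_mk k, map_smul, map_mul, map_pow, map_pow]
  rfl

theorem x_pow_mul_y_pow {i j : ℕ} (hi : i ≠ 0) (hj : j ≠ 0) :
    (x : TruncCross k a b) ^ i * y ^ j = 0 := by
  obtain ⟨i, rfl⟩ := Nat.exists_eq_add_one_of_ne_zero hi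
  obtain ⟨j, rfl⟩ := Nat.exists_eq_add_one_of_ne_zero hj
  calc x ^ (i + 1) * y ^ (j + 1) = x ^ i * y ^ j * (x * y) := by ring
    _ = 0 := by rw [x_mul_y, mul_zero]

theorem exists_inl_add_inr (z : TruncCross k a b) : ∃ u w, inl u + inr w = z := by
  obtain ⟨p, rfl⟩ := Ideal.Quotient.mk_surjective z
  induction p using MvPolynomial.induction_on' with
  | monomial s c =>
    rw [mk_monomial]
    by_cases h1 : s 1 = 0
    · exact ⟨c • AdjoinRoot.root _ ^ s 0, 0, by simp [inl, h1]⟩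
    by_cases h0 : s 0 = 0
    · exact ⟨0, c • AdjoinRoot.root _ ^ s 1, by simp [inr, h0]⟩
    · exact ⟨0, 0, by simp [x_pow_mul_y_pow h0 h1]⟩
  | add p q hp hq =>
    obtain ⟨u, w, hp⟩ := hp
    obtain ⟨u', w', hq⟩ := hq
    exact ⟨u + u', w + w', by rw [map_add, map_add, map_add, ← hp, ← hq]; abel⟩

end TruncCross

end TruncatedPolynomials

open Polynomial MvPolynomial in
theorem stmt_6_general (k : Type*) [Field k] (a b : ℕ) :
    letI A := Polynomial k ⧸ Ideal.span {(Polynomial.X : Polynomial k) ^ (a + 1)}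
    letI B := Polynomial k ⧸ Ideal.span {(Polynomial.X : Polynomial k) ^ (b + 1)}
    letI R := MvPolynomial (Fin 2) k ⧸
      Ideal.span {(MvPolynomial.X 0 : MvPolynomial (Fin 2) k) ^ (a + 1),
        MvPolynomial.X 1 ^ (b + 1), MvPolynomial.X 0 * MvPolynomial.X 1}
    ∀ (f : A →ₐ[k] k) (g : B →ₐ[k] k),
      f (Ideal.Quotient.mk _ Polynomial.X) = 0 →
      g (Ideal.Quotient.mk _ Polynomial.X) = 0 →
      Nonempty (R ≃ₐ[k]
        AlgHom.equalizer (f.comp (AlgHom.fst k A B)) (g.comp (AlgHom.snd k A B))) := by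
  intro f g hf hg
  exact ⟨fiberProductEquiv (TruncCross.toProd_inl hf) (TruncCross.toProd_inr hg)
    TruncCross.exists_inl_add_inr⟩

open Polynomial MvPolynomial in
theorem stmt_6 (k : Type*) [Field k] (a b : ℕ) (ha : 1 ≤ a) (hb : 1 ≤ b) :
    letI A := Polynomial k ⧸ Ideal.span {(Polynomial.X : Polynomial k) ^ (a + 1)}
    letI B := Polynomial k ⧸ Ideal.span {(Polynomial.X : Polynomial k) ^ (b + 1)}
    letI R := MvPolynomial (Fin 2) k ⧸
      Ideal.span {(MvPolynomial.X 0 : MvPolynomial (Fin 2) k) ^ (a + 1),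
        MvPolynomial.X 1 ^ (b + 1), MvPolynomial.X 0 * MvPolynomial.X 1}
    ∀ (f : A →ₐ[k] k) (g : B →ₐ[k] k),
      f (Ideal.Quotient.mk _ Polynomial.X) = 0 →
      g (Ideal.Quotient.mk _ Polynomial.X) = 0 →
      Nonempty (R ≃ₐ[k]
        AlgHom.equalizer (f.comp (AlgHom.fst k A B)) (g.comp (AlgHom.snd k A B))) :=
  stmt_6_general k a b
end

section
/- Let k be a field and R a finite-dimensional commutative local k-algebra with maximal ideal m and residue field k. The canonical evaluation pairing R × Hom_k(R, k) → k induces a perfect pairing Ann_R(m) × (Hom_k(R,k) / m·Hom_k(R,k)) → k. In particular, dim_k Ann_R(m) equals the minimal number of generators of Hom_k(R,k) as an R-module. -/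
/-- The socle of a local algebra: the annihilator of the maximal ideal,
as a `k`-submodule. -/
def socle (k R : Type*) [Field k] [CommRing R] [Algebra k R] [IsLocalRing R] :
    Submodule k R where
  carrier := {r | ∀ s ∈ IsLocalRing.maximalIdeal R, r * s = 0}
  add_mem' := by
    intro a b ha hb s hs
    rw [add_mul, ha s hs, hb s hs, add_zero]
  zero_mem' := by
    intro s hs
    rw [zero_mul]
  smul_mem' := by
    intro c a ha s hs
    rw [Algebra.smul_def, mul_assoc, ha s hs, mul_zero]

/-- The submodule `m · Hom_k(R,k)` of the dual, where the `R`-module structure on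
`Hom_k(R,k)` is given by `(s • f)(x) = f (s * x)`. -/
def mDual (k R : Type*) [Field k] [CommRing R] [Algebra k R] [IsLocalRing R] :
    Submodule k (Module.Dual k R) :=
  Submodule.span k
    {g : Module.Dual k R | ∃ s ∈ IsLocalRing.maximalIdeal R, ∃ f : Module.Dual k R,
      g = f.comp (LinearMap.mulLeft k s)}

lemma mDual_le (k R : Type*) [Field k] [CommRing R] [Algebra k R] [IsLocalRing R] :
    mDual k R ≤ (socle k R).dualAnnihilator := by
  rw [mDual, Submodule.span_le]
  rintro g ⟨s, hs, f, rfl⟩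
  rw [SetLike.mem_coe, Submodule.mem_dualAnnihilator]
  intro r hr
  simp [LinearMap.mulLeft_apply, mul_comm s r, hr s hs]

lemma coann_le (k R : Type*) [Field k] [CommRing R] [Algebra k R] [IsLocalRing R] :
    (mDual k R).dualCoannihilator ≤ socle k R := by
  intro r hr s hs
  rw [Submodule.mem_dualCoannihilator] at hr
  rw [mul_comm, ← Module.forall_dual_apply_eq_zero_iff k]
  intro f
  exact hr _ (Submodule.subset_span ⟨s, hs, f, rfl⟩)

lemma mDual_eq (k R : Type*) [Field k] [CommRing R] [Algebra k R] [IsLocalRing R]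
    [FiniteDimensional k R] : mDual k R = (socle k R).dualAnnihilator := by
  refine le_antisymm (mDual_le k R) ?_
  have h2 : (socle k R).dualAnnihilator ≤ ((mDual k R).dualCoannihilator).dualAnnihilator :=
    fun f hf => by
      rw [Submodule.mem_dualAnnihilator] at hf ⊢
      exact fun r hr => hf r (coann_le k R hr)
  exact h2.trans Subspace.dualCoannihilator_dualAnnihilator_eq.le

theorem stmt_9 (k R : Type*) [Field k] [CommRing R] [Algebra k R]
    [IsLocalRing R] [FiniteDimensional k R]
    (hres : Function.Bijective (algebraMap k (IsLocalRing.ResidueField R))) :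
    (∀ r ∈ socle k R, ∀ g ∈ mDual k R, g r = 0) ∧
    (∀ r ∈ socle k R, (∀ f : Module.Dual k R, f r = 0) → r = 0) ∧
    (∀ f : Module.Dual k R, (∀ r ∈ socle k R, f r = 0) → f ∈ mDual k R) ∧
    Module.finrank k (socle k R) =
      Module.finrank k (Module.Dual k R ⧸ mDual k R) := by
  refine ⟨fun r hr g hg => ?_, fun r _ hf => ?_, fun f hf => ?_, ?_⟩
  · exact (Submodule.mem_dualAnnihilator g).mp (mDual_le k R hg) r hr
  · exact (Module.forall_dual_apply_eq_zero_iff k r).mp hf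
  · rw [mDual_eq, Submodule.mem_dualAnnihilator]; exact hf
  · have h1 := Subspace.finrank_add_finrank_dualCoannihilator_eq (mDual k R)
    have h2 : (mDual k R).dualCoannihilator = socle k R := by
      rw [mDual_eq, Subspace.dualAnnihilator_dualCoannihilator_eq]
    have h3 := Submodule.finrank_quotient_add_finrank (mDual k R)
    rw [h2] at h1
    rw [Subspace.dual_finrank_eq] at h3
    omega
end
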